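/- Let K be an algebraically closed field of characteristic zero and let V, W be indecomposable finite-dimensional K[x,y]-modules with dim V = dim W ≥ 7. Then V and W are weakly isomorphic if and only if their associated Lie algebras L_V = K⟨P,Q⟩ ⋉ V and L_W = K⟨S,T⟩ ⋉ W are isomorphic as Lie algebras. -/

import Mathlib

/-- The bracket of the semidirect product `L_V = K⟨P,Q⟩ ⋉ V` on `(K × K) × V`. -/
def lieBk {K V : Type*} [Field K] [AddCommGroup V] [Module K V]
    (P Q : V →ₗ[K] V) (a b : (K × K) × V) : (K × K) × V :=
  (0, (a.1.1 • P + a.1.2 • Q) b.2 - (b.1.1 • P + b.1.2 • Q) a.2)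

/-- The abelian ideal `{0} ⊕ V` of `L_V`. -/
def vEmb (K V : Type*) [Field K] [AddCommGroup V] [Module K V] :
    Submodule K ((K × K) × V) :=
  (⊥ : Submodule K (K × K)).prod (⊤ : Submodule K V)

/-- The subalgebra `K⟨P,Q⟩ = K² ⊕ {0}` of `L_V`. -/
def pqEmb (K V : Type*) [Field K] [AddCommGroup V] [Module K V] :
    Submodule K ((K × K) × V) :=
  (⊤ : Submodule K (K × K)).prod (⊥ : Submodule K V)

/-- Weak isomorphism of the `K[x,y]`-modules given by operator pairs `(P,Q)` and
`(S,T)`: some twist of `(S,T)` by an invertible 2×2 matrix is isomorphic to `(P,Q)`. -/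
def WeakIso {K V W : Type*} [Field K] [AddCommGroup V] [Module K V]
    [AddCommGroup W] [Module K W] (P Q : V →ₗ[K] V) (S T : W →ₗ[K] W) : Prop :=
  ∃ M : Matrix (Fin 2) (Fin 2) K, IsUnit M ∧ ∃ e : V ≃ₗ[K] W,
    ∀ v, e (P v) = (M 0 0 • S + M 0 1 • T) (e v) ∧
         e (Q v) = (M 1 0 • S + M 1 1 • T) (e v)

/-- Indecomposability of the `K[x,y]`-module on V given by operators P, Q: V is
nonzero and not a direct sum of two nonzero submodules. -/
def IndecModule {K V : Type*} [Field K] [AddCommGroup V] [Module K V]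
    (P Q : V →ₗ[K] V) : Prop :=
  (∃ v : V, v ≠ 0) ∧
  ¬ ∃ A B : Submodule K V, (∀ v ∈ A, P v ∈ A ∧ Q v ∈ A) ∧
      (∀ v ∈ B, P v ∈ B ∧ Q v ∈ B) ∧ A ≠ ⊥ ∧ B ≠ ⊥ ∧ A ⊓ B = ⊥ ∧ A ⊔ B = ⊤

/-!
A weak isomorphism `(Λ, e)` gives the Lie algebra isomorphism `Λ × e`. Conversely, write an
isomorphism `φ : L_V ≃ L_W` in blocks, `φ (y, v) = (A y + G v, B y + H v)`, and split by the
rank of `G`, the projection to `K²` of the image of the abelian ideal `V`. Write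
`S_μ = μ.1 • S + μ.2 • T` for `μ ∈ K²`, and likewise `P_y`.

* `G = 0`: `H : V ≃ W` intertwines `(P, Q)` with the twist of `(S, T)` by `A`.
* `G` onto: `S` and `T` vanish on `H (ker G)`, of codimension `2`, while their ranges span at
  most `4` dimensions. For `dim W ≥ 7` some vector killed by both lies outside their ranges and
  spans a trivial direct summand, contradicting indecomposability.
* `G = l ⊗ p`: `H (P_y v) = S_(A y) (H v) - l v • S_p (B y)`, and `S_p` kills the hyperplane
  `H (ker l)`. Correct `H` to `e = H + l ⊗ c` and `A` to `A - τ ⊗ p`: if `A y₀ = p`, take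
  `c = -B y₀` and `τ = 0`; otherwise take `y₀ ≠ 0` in `ker A`, `c` a multiple of `B y₀`, and
  `τ y` the coordinate of `B y` along `e v₀` modulo `H (ker l)`.
-/

open Module Matrix LinearMap

section

variable {K V W : Type*} [Field K] [AddCommGroup V] [Module K V] [AddCommGroup W] [Module K W]

def pairAct (S T : Module.End K W) : (K × K) →ₗ[K] Module.End K W where
  toFun μ := μ.1 • S + μ.2 • T
  map_add' μ ν := by simp only [Prod.fst_add, Prod.snd_add, add_smul]; abel
  map_smul' c μ := by simp only [Prod.smul_fst, Prod.smul_snd, smul_eq_mul, mul_smul,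
    RingHom.id_apply, smul_add]

lemma pairAct_apply (S T : Module.End K W) (μ : K × K) (w : W) :
    pairAct S T μ w = μ.1 • S w + μ.2 • T w := rfl

lemma lieBk_eq (P Q : Module.End K V) (a b : (K × K) × V) :
    lieBk P Q a b = (0, pairAct P Q a.1 b.2 - pairAct P Q b.1 a.2) := rfl

lemma pairAct_toLin_transpose (S T : Module.End K W) (M : Matrix (Fin 2) (Fin 2) K)
    (y : K × K) :
    pairAct S T (Matrix.toLin (Basis.finTwoProd K) (Basis.finTwoProd K) Mᵀ y) =
      y.1 • (M 0 0 • S + M 0 1 • T) + y.2 • (M 1 0 • S + M 1 1 • T) := by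
  rw [Matrix.eta_fin_two Mᵀ, Matrix.toLin_finTwoProd_apply]
  ext w
  simp only [pairAct_apply, Matrix.transpose_apply, LinearMap.add_apply, LinearMap.smul_apply]
  module

lemma weakIso_iff (P Q : Module.End K V) (S T : Module.End K W) :
    WeakIso P Q S T ↔ ∃ (Λ : (K × K) ≃ₗ[K] (K × K)) (e : V ≃ₗ[K] W),
      ∀ y v, e (pairAct P Q y v) = pairAct S T (Λ y) (e v) := by
  set b := Basis.finTwoProd K
  constructor
  · rintro ⟨M, hM, e, he⟩
    have hΛ : IsUnit (Matrix.toLin b b Mᵀ) := by simpa using hM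
    refine ⟨.ofBijective _ (Module.End.isUnit_iff _ |>.mp hΛ), e, fun y v => ?_⟩
    rw [LinearEquiv.ofBijective_apply, pairAct_toLin_transpose]
    simp only [pairAct_apply, map_add, map_smul, LinearMap.add_apply, LinearMap.smul_apply,
      (he v).1, (he v).2]
  · rintro ⟨Λ, e, he⟩
    set M := (LinearMap.toMatrix b b Λ)ᵀ
    have hΛ (y : K × K) : Matrix.toLin b b Mᵀ y = Λ y := by
      rw [Matrix.transpose_transpose, Matrix.toLin_toMatrix, LinearEquiv.coe_coe]
    refine ⟨M, ?_, e, fun v => ⟨?_, ?_⟩⟩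
    · rw [Matrix.isUnit_transpose, LinearMap.isUnit_toMatrix_iff, Module.End.isUnit_iff]
      exact Λ.bijective
    · have := he (1, 0) v
      rw [← hΛ, pairAct_toLin_transpose] at this
      simpa [pairAct_apply] using this
    · have := he (0, 1) v
      rw [← hΛ, pairAct_toLin_transpose] at this
      simpa [pairAct_apply] using this

lemma weakIso_of_surjective {P Q : Module.End K V} {S T : Module.End K W}
    {Λ : (K × K) →ₗ[K] (K × K)} (hΛ : Function.Surjective Λ) (e : V ≃ₗ[K] W)
    (he : ∀ y v, e (pairAct P Q y v) = pairAct S T (Λ y) (e v)) : WeakIso P Q S T :=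
  (weakIso_iff P Q S T).mpr ⟨.ofBijective Λ ⟨injective_iff_surjective.mpr hΛ, hΛ⟩, e, he⟩

lemma map_lieBk_prodCongr {P Q : Module.End K V} {S T : Module.End K W}
    (Λ : (K × K) ≃ₗ[K] (K × K)) (e : V ≃ₗ[K] W)
    (he : ∀ y v, e (pairAct P Q y v) = pairAct S T (Λ y) (e v)) (a b : (K × K) × V) :
    Λ.prodCongr e (lieBk P Q a b) = lieBk S T (Λ.prodCongr e a) (Λ.prodCongr e b) := by
  simp [lieBk_eq, he]

lemma finrank_map_eq_of_injOn {f : V →ₗ[K] W} {p : Submodule K V}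
    (hf : ∀ v ∈ p, f v = 0 → v = 0) : finrank K (p.map f) = finrank K p := by
  rw [← range_domRestrict]
  refine finrank_range_of_inj (injective_iff_map_eq_zero _ |>.mpr fun v hv => ?_)
  exact Subtype.ext (hf v v.2 hv)

lemma exists_eq_smul_of_finrank_range_eq_one {M : Type*} [AddCommGroup M] [Module K M]
    (G : V →ₗ[K] M) (hG : finrank K (range G) = 1) :
    ∃ (l : V →ₗ[K] K) (p : M) (v0 : V), p ≠ 0 ∧ l v0 = 1 ∧ ∀ v, G v = l v • p := by
  have := Module.finite_of_finrank_eq_succ hG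
  let b := Module.finBasisOfFinrankEq K (range G) hG
  obtain ⟨v0, hv0⟩ := mem_range.mp (b 0).2
  have hb0 : G.rangeRestrict v0 = b 0 := Subtype.ext hv0
  refine ⟨b.coord 0 ∘ₗ G.rangeRestrict, b 0, v0, fun h => b.ne_zero 0 (Subtype.ext h),
    by simp [hb0], fun v => ?_⟩
  have := congrArg Subtype.val (b.sum_repr (G.rangeRestrict v))
  simpa using this.symm

lemma exists_linearEquiv_add_smulRight [FiniteDimensional K V] [FiniteDimensional K W]
    (hdim : finrank K V = finrank K W) {H : V →ₗ[K] W} {l : V →ₗ[K] K} {v0 : V} {c : W}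
    (hv0 : l v0 = 1) (hinj : ∀ v, l v = 0 → H v = 0 → v = 0)
    (hc : H v0 + c ∉ (ker l).map H) : ∃ e : V ≃ₗ[K] W, ∀ v, e v = H v + l v • c := by
  have hinj' : Function.Injective (H + l.smulRight c) := by
    refine injective_iff_map_eq_zero _ |>.mpr fun v hv => ?_
    rw [LinearMap.add_apply, smulRight_apply] at hv
    by_cases hl : l v = 0
    · exact hinj v hl (by simpa [hl] using hv)
    · refine absurd ?_ hc
      have hmem : l v • (H v0 + c) = -H (v - l v • v0) := by
        rw [map_sub, map_smul]
        linear_combination (norm := module) hv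
      rw [← Submodule.smul_mem_iff _ hl, hmem]
      exact neg_mem (Submodule.mem_map_of_mem (by simp [hv0]))
  exact ⟨_, fun v => LinearMap.linearEquivOfInjective_apply hinj' hdim v⟩

section Decomposition

variable {S T : Module.End K W}

lemma not_indecModule_of_mem_ker_of_notMem_range {z : W} (hz : z ∈ ker S ⊓ ker T)
    (hzJ : z ∉ range S ⊔ range T) (hW : 2 ≤ finrank K W) : ¬ IndecModule S T := by
  rintro ⟨-, hind⟩
  have hz0 : z ≠ 0 := fun h => hzJ (h ▸ zero_mem _)
  obtain ⟨B, hJB, hB⟩ := (Submodule.disjoint_span_singleton_of_notMem hzJ).exists_isCompl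
  refine hind ⟨K ∙ z, B, ?_, ?_, ?_, ?_, hB.symm.inf_eq_bot, hB.symm.sup_eq_top⟩
  · intro v hv
    obtain ⟨c, rfl⟩ := Submodule.mem_span_singleton.mp hv
    obtain ⟨hSz, hTz⟩ := Submodule.mem_inf.mp hz
    simp [mem_ker.mp hSz, mem_ker.mp hTz]
  · exact fun v _ => ⟨hJB (Submodule.mem_sup_left ⟨v, rfl⟩),
      hJB (Submodule.mem_sup_right ⟨v, rfl⟩)⟩
  · simpa [Submodule.span_singleton_eq_bot] using hz0
  · rintro rfl
    have h1 := finrank_span_singleton (K := K) hz0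
    rw [eq_top_of_bot_isCompl hB, finrank_top] at h1
    omega

lemma not_indecModule_of_finrank_ker [FiniteDimensional K W] (hW : 2 ≤ finrank K W)
    (h : 2 * finrank K W < 3 * finrank K ↥(ker S ⊓ ker T)) : ¬ IndecModule S T := by
  have hS := finrank_range_add_finrank_ker S
  have hT := finrank_range_add_finrank_ker T
  have hNS := Submodule.finrank_mono (inf_le_left : ker S ⊓ ker T ≤ ker S)
  have hNT := Submodule.finrank_mono (inf_le_right : ker S ⊓ ker T ≤ ker T)
  have hJ := Submodule.finrank_add_le_finrank_add_finrank (range S) (range T)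
  have hNJ : ¬ ker S ⊓ ker T ≤ range S ⊔ range T := fun hle => by
    have := Submodule.finrank_mono hle
    omega
  obtain ⟨z, hz, hzJ⟩ := SetLike.not_le_iff_exists.mp hNJ
  exact not_indecModule_of_mem_ker_of_notMem_range hz hzJ hW

end Decomposition

/-- The identities satisfied by the blocks of a bracket-preserving linear bijection
`φ (y, v) = (A y + G v, B y + H v)` from `L_V` to `L_W`. -/
structure IsLieIsoBlocks (P Q : Module.End K V) (S T : Module.End K W)
    (A : (K × K) →ₗ[K] (K × K)) (B : (K × K) →ₗ[K] W) (G : V →ₗ[K] (K × K))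
    (H : V →ₗ[K] W) : Prop where
  pairAct_A_B_comm : ∀ y y', pairAct S T (A y) (B y') = pairAct S T (A y') (B y)
  pairAct_G_H_comm : ∀ v v', pairAct S T (G v) (H v') = pairAct S T (G v') (H v)
  G_pairAct : ∀ y v, G (pairAct P Q y v) = 0
  H_pairAct : ∀ y v,
    H (pairAct P Q y v) = pairAct S T (A y) (H v) - pairAct S T (G v) (B y)
  injective : ∀ y v, A y + G v = 0 → B y + H v = 0 → y = 0 ∧ v = 0
  surjective : ∀ z, ∃ y v, A y + G v = z

lemma isLieIsoBlocks_of_lieIso {P Q : Module.End K V} {S T : Module.End K W}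
    (φ : ((K × K) × V) ≃ₗ[K] ((K × K) × W))
    (hφ : ∀ a b, φ (lieBk P Q a b) = lieBk S T (φ a) (φ b)) :
    IsLieIsoBlocks P Q S T (fst K _ _ ∘ₗ φ.toLinearMap ∘ₗ inl K _ _)
      (snd K _ _ ∘ₗ φ.toLinearMap ∘ₗ inl K _ _) (fst K _ _ ∘ₗ φ.toLinearMap ∘ₗ inr K _ _)
      (snd K _ _ ∘ₗ φ.toLinearMap ∘ₗ inr K _ _) := by
  set A := fst K _ _ ∘ₗ φ.toLinearMap ∘ₗ inl K (K × K) V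
  set B := snd K _ _ ∘ₗ φ.toLinearMap ∘ₗ inl K (K × K) V
  set G := fst K _ _ ∘ₗ φ.toLinearMap ∘ₗ inr K (K × K) V
  set H := snd K _ _ ∘ₗ φ.toLinearMap ∘ₗ inr K (K × K) V
  have hsplit (y : K × K) (v : V) : φ (y, v) = (A y + G v, B y + H v) := by
    have : ((y, v) : (K × K) × V) = inl K _ _ y + inr K _ _ v := by simp
    rw [this, map_add]
    rfl
  have hbr (y y' : K × K) (v v' : V) :
      G (pairAct P Q y v' - pairAct P Q y' v) = 0 ∧
      H (pairAct P Q y v' - pairAct P Q y' v) =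
        pairAct S T (A y + G v) (B y' + H v') - pairAct S T (A y' + G v') (B y + H v) := by
    have := hφ (y, v) (y', v')
    rw [lieBk_eq, hsplit, hsplit, hsplit, lieBk_eq] at this
    simpa using this
  refine ⟨fun y y' => ?_, fun v v' => ?_, fun y v => ?_, fun y v => ?_, fun y v hG hH => ?_,
    fun z => ?_⟩
  · exact sub_eq_zero.mp (by simpa using (hbr y y' 0 0).2.symm)
  · exact sub_eq_zero.mp (by simpa using (hbr 0 0 v v').2.symm)
  · simpa using (hbr y 0 0 v).1
  · simpa using (hbr y 0 0 v).2
  · have : φ (y, v) = φ 0 := by rw [hsplit, hG, hH, map_zero, Prod.mk_zero_zero]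
    simpa using φ.injective this
  · obtain ⟨⟨y, v⟩, hyv⟩ := φ.surjective (z, 0)
    exact ⟨y, v, by rw [hsplit] at hyv; exact congrArg Prod.fst hyv⟩

namespace IsLieIsoBlocks

variable {P Q : Module.End K V} {S T : Module.End K W} {A : (K × K) →ₗ[K] (K × K)}
  {B : (K × K) →ₗ[K] W} {G : V →ₗ[K] (K × K)} {H : V →ₗ[K] W}

lemma weakIso_of_G_eq_zero [FiniteDimensional K V] [FiniteDimensional K W]
    (h : IsLieIsoBlocks P Q S T A B G H) (hdim : finrank K V = finrank K W) (hG : G = 0) :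
    WeakIso P Q S T := by
  have hA : Function.Surjective A := fun z => by
    obtain ⟨y, v, hz⟩ := h.surjective z
    exact ⟨y, by simpa [hG] using hz⟩
  have hH : Function.Injective H := injective_iff_map_eq_zero _ |>.mpr fun v hv =>
    (h.injective 0 v (by simp [hG]) (by simp [hv])).2
  exact weakIso_of_surjective hA (H.linearEquivOfInjective hH hdim) fun y v => by
    simp [h.H_pairAct, hG]

lemma not_indecModule_of_range_G_eq_top [FiniteDimensional K V] [FiniteDimensional K W]
    (h : IsLieIsoBlocks P Q S T A B G H) (hdim : finrank K V = finrank K W)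
    (h7 : 7 ≤ finrank K W) (hG : range G = ⊤) :
    ¬ IndecModule S T := by
  have hact (v : V) (hv : G v = 0) (μ : K × K) : pairAct S T μ (H v) = 0 := by
    obtain ⟨v', rfl⟩ := mem_range.mp (hG ▸ Submodule.mem_top : μ ∈ range G)
    simp [h.pairAct_G_H_comm v' v, hv]
  have hker : (ker G).map H ≤ ker S ⊓ ker T := by
    rintro _ ⟨v, hv, rfl⟩
    exact ⟨by simpa [pairAct_apply] using hact v hv (1, 0),
      by simpa [pairAct_apply] using hact v hv (0, 1)⟩
  have hmap : finrank K ((ker G).map H) = finrank K (ker G) :=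
    finrank_map_eq_of_injOn fun v hv hHv => (h.injective 0 v (by simpa using hv) (by simpa)).2
  have hrank := finrank_range_add_finrank_ker G
  rw [hG, finrank_top, finrank_prod, finrank_self] at hrank
  have := Submodule.finrank_mono hker
  exact not_indecModule_of_finrank_ker (by omega) (by omega)

section RankOne

variable {l : V →ₗ[K] K} {p : K × K} {v0 : V}

lemma l_pairAct (h : IsLieIsoBlocks P Q S T A B G H) (hGl : ∀ v, G v = l v • p) (hp : p ≠ 0)
    (y : K × K) (v : V) : l (pairAct P Q y v) = 0 := by
  simpa [hp, hGl] using h.G_pairAct y v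

lemma pairAct_p_H (h : IsLieIsoBlocks P Q S T A B G H) (hGl : ∀ v, G v = l v • p)
    (hv0 : l v0 = 1) (v : V) : pairAct S T p (H v) = l v • pairAct S T p (H v0) := by
  simpa [hGl, hv0] using h.pairAct_G_H_comm v0 v

lemma injOn_ker (h : IsLieIsoBlocks P Q S T A B G H) (hGl : ∀ v, G v = l v • p) (v : V)
    (hl : l v = 0) (hH : H v = 0) : v = 0 :=
  (h.injective 0 v (by simp [hGl, hl]) (by simp [hH])).2

lemma eq_zero_of_mem_map_ker (h : IsLieIsoBlocks P Q S T A B G H)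
    (hGl : ∀ v, G v = l v • p) (hv0 : l v0 = 1) {y : K × K} {s : K} (hA : A y = s • p)
    (hB : B y - s • H v0 ∈ (ker l).map H) : y = 0 := by
  obtain ⟨v, hv, hHv⟩ := hB
  refine (h.injective y (-(s • v0 + v)) ?_ ?_).1
  · simp [hGl, hA, hv0, mem_ker.mp hv]
  · rw [map_neg, map_add, map_smul, hHv]
    abel

lemma weakIso_of_correction (h : IsLieIsoBlocks P Q S T A B G H)
    (hGl : ∀ v, G v = l v • p) (hp : p ≠ 0) (hv0 : l v0 = 1) {c : W} {e : V ≃ₗ[K] W}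
    (he : ∀ v, e v = H v + l v • c) (τ : (K × K) →ₗ[K] K)
    (hc : ∀ y, pairAct S T (A y) c - τ y • pairAct S T p (H v0 + c) = -pairAct S T p (B y))
    (hrange : p ∈ range (A - τ.smulRight p)) :
    WeakIso P Q S T := by
  set Λ := A - τ.smulRight p
  obtain ⟨x, hx⟩ := hrange
  have hΛ : Function.Surjective Λ := fun z => by
    obtain ⟨y, v, rfl⟩ := h.surjective z
    refine ⟨y + (τ y + l v) • x, ?_⟩
    rw [map_add, map_smul, hx, hGl]
    simp only [Λ, LinearMap.sub_apply, smulRight_apply]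
    module
  refine weakIso_of_surjective hΛ e fun y v => ?_
  rw [he, he, h.l_pairAct hGl hp, zero_smul, add_zero, h.H_pairAct, hGl]
  have hcy := hc y
  simp only [Λ, LinearMap.sub_apply, smulRight_apply, map_sub, map_smul, map_add,
    LinearMap.smul_apply] at hcy ⊢
  rw [h.pairAct_p_H hGl hv0]
  linear_combination (norm := module) (-l v) • hcy

lemma weakIso_of_mem_range [FiniteDimensional K V] [FiniteDimensional K W]
    (h : IsLieIsoBlocks P Q S T A B G H) (hdim : finrank K V = finrank K W)
    (hGl : ∀ v, G v = l v • p) (hp : p ≠ 0) (hv0 : l v0 = 1) (hpA : p ∈ range A) :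
    WeakIso P Q S T := by
  obtain ⟨y0, hy0⟩ := hpA
  have hu : H v0 + -B y0 ∉ (ker l).map H := fun hmem => hp <| by
    have hB : B y0 - (1 : K) • H v0 ∈ (ker l).map H := by
      convert neg_mem hmem using 1
      module
    rw [← hy0, h.eq_zero_of_mem_map_ker hGl hv0 (by rw [hy0, one_smul]) hB, map_zero]
  obtain ⟨e, he⟩ := exists_linearEquiv_add_smulRight hdim hv0 (h.injOn_ker hGl) hu
  refine h.weakIso_of_correction hGl hp hv0 he 0 (fun y => ?_) ⟨y0, by simp [hy0]⟩
  simp [h.pairAct_A_B_comm y y0, hy0]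

lemma weakIso_of_notMem_range [FiniteDimensional K V] [FiniteDimensional K W]
    (h : IsLieIsoBlocks P Q S T A B G H) (hdim : finrank K V = finrank K W)
    (hGl : ∀ v, G v = l v • p) (hp : p ≠ 0) (hv0 : l v0 = 1) (hpA : p ∉ range A) :
    WeakIso P Q S T := by
  obtain ⟨y0, hy0A, hy0⟩ : ∃ y0, A y0 = 0 ∧ y0 ≠ 0 := by
    have : ¬ Function.Injective A := fun hA =>
      hpA (mem_range.mpr (injective_iff_surjective.mp hA p))
    simpa [injective_iff_map_eq_zero] using this
  set X := (ker l).map H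
  have hBX : B y0 ∉ X := fun hmem => hy0 <|
    h.eq_zero_of_mem_map_ker hGl hv0 (s := 0) (by simp [hy0A]) (by rwa [zero_smul, sub_zero])
  have hAB (y : K × K) : pairAct S T (A y) (B y0) = 0 := by simp [h.pairAct_A_B_comm y y0, hy0A]
  obtain ⟨a, hu⟩ : ∃ a : K, H v0 + a • B y0 ∉ X := by
    by_cases hH : H v0 ∈ X
    · refine ⟨1, fun hmem => hBX ?_⟩
      simpa using X.sub_mem hmem hH
    · exact ⟨0, by simpa using hH⟩
  obtain ⟨e, he⟩ := exists_linearEquiv_add_smulRight hdim hv0 (h.injOn_ker hGl) hu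
  -- `π` is the coordinate along `e v₀` in `W = H (ker l) ⊕ K ∙ e v₀`.
  set π := l ∘ₗ e.symm.toLinearMap
  have hπ (w : W) : pairAct S T p w = π w • pairAct S T p (H v0 + a • B y0) := by
    obtain ⟨v, rfl⟩ := e.surjective w
    have hπe : π (e v) = l v := congrArg l (e.symm_apply_apply v)
    rw [hπe, he, map_add, map_smul, h.pairAct_p_H hGl hv0 v, map_add, smul_add]
  have hπB : π (B y0) ≠ 0 := fun h0 => by
    have h0' : l (e.symm (B y0)) = 0 := h0
    exact hBX ⟨e.symm (B y0), h0', by simpa [h0'] using (he (e.symm (B y0))).symm⟩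
  refine h.weakIso_of_correction hGl hp hv0 he (π ∘ₗ B) (fun y => ?_)
    ⟨-(π (B y0))⁻¹ • y0, ?_⟩
  · simp [hπ (B y), hAB]
  · simp [hy0A, hπB]

end RankOne

lemma weakIso [FiniteDimensional K V] [FiniteDimensional K W]
    (h : IsLieIsoBlocks P Q S T A B G H) (hdim : finrank K V = finrank K W)
    (h7 : 7 ≤ finrank K W) (hW : IndecModule S T) :
    WeakIso P Q S T := by
  have hle : finrank K (range G) ≤ 2 := (Submodule.finrank_le _).trans (by simp)
  interval_cases hr : finrank K (range G)
  · exact h.weakIso_of_G_eq_zero hdim (range_eq_bot.mp (Submodule.finrank_eq_zero.mp hr))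
  · obtain ⟨l, p, v0, hp, hv0, hGl⟩ := exists_eq_smul_of_finrank_range_eq_one G hr
    by_cases hpA : p ∈ range A
    · exact h.weakIso_of_mem_range hdim hGl hp hv0 hpA
    · exact h.weakIso_of_notMem_range hdim hGl hp hv0 hpA
  · refine absurd hW (h.not_indecModule_of_range_G_eq_top hdim h7 ?_)
    exact Submodule.eq_top_of_finrank_eq (by simpa using hr)

end IsLieIsoBlocks

end

theorem stmt_18_general {K V W : Type*} [Field K]
    [AddCommGroup V] [Module K V] [AddCommGroup W] [Module K W]
    [FiniteDimensional K V] [FiniteDimensional K W]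
    (P Q : V →ₗ[K] V) (S T : W →ₗ[K] W)
    (hW : IndecModule S T)
    (hdim7 : 7 ≤ Module.finrank K V) :
    WeakIso P Q S T ↔
      ∃ φ : ((K × K) × V) ≃ₗ[K] ((K × K) × W),
        ∀ a b, φ (lieBk P Q a b) = lieBk S T (φ a) (φ b) := by
  refine ⟨fun hweak => ?_, fun ⟨φ, hφ⟩ => ?_⟩
  · obtain ⟨Λ, e, he⟩ := (weakIso_iff P Q S T).mp hweak
    exact ⟨Λ.prodCongr e, map_lieBk_prodCongr Λ e he⟩
  have hdim : finrank K V = finrank K W := by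
    have := φ.finrank_eq
    simp only [finrank_prod, finrank_self] at this
    omega
  exact (isLieIsoBlocks_of_lieIso φ hφ).weakIso hdim (hdim ▸ hdim7) hW

/-- Theorem 2: indecomposable modules of equal dimension ≥ 7 are
weakly isomorphic iff their associated Lie algebras are isomorphic. -/
theorem stmt_18 {K V W : Type*} [Field K] [IsAlgClosed K] [CharZero K]
    [AddCommGroup V] [Module K V] [AddCommGroup W] [Module K W]
    [FiniteDimensional K V] [FiniteDimensional K W]
    (P Q : V →ₗ[K] V) (S T : W →ₗ[K] W)
    (hPQ : ∀ v, P (Q v) = Q (P v)) (hST : ∀ w, S (T w) = T (S w))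
    (hV : IndecModule P Q) (hW : IndecModule S T)
    (hdim : Module.finrank K V = Module.finrank K W)
    (hdim7 : 7 ≤ Module.finrank K V) :
    WeakIso P Q S T ↔
      ∃ φ : ((K × K) × V) ≃ₗ[K] ((K × K) × W),
        ∀ a b, φ (lieBk P Q a b) = lieBk S T (φ a) (φ b) :=
  stmt_18_general P Q S T hW hdim7
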